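/- Let Γ be a finitely generated irreducible subgroup of Diff₊(I), with a fixed finite symmetric generating set, such that every non-identity element of Γ has finitely many fixed points in (0,1). Let f be the biggest generator of Γ (i.e., ξ ≤ f in the biorder for every generator ξ), assume f has at least one fixed point in (0,1), let z = min Fix(f), and let ω ∈ Γ_f with ω(z) > z. Then there exists ε > 0 such that for all a, b with 0 < a < b < ε and every integer p ≥ 4 with f^p(a) < b, one has f^{p−4}(ω f^{−n} ω^{−1}(a)) < ω f^{−n} ω^{−1}(b) for all sufficiently large n. -/

import Mathlib

noncomputable section

/-- The unit interval `[0,1] ⊆ ℝ`. -/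
abbrev unitI : Set ℝ := Set.Icc (0:ℝ) 1

/-- Ambient group: bijections of the unit interval. -/
abbrev IntervalMap : Type := Equiv.Perm ↥unitI

/-- The extension of `σ` to `ℝ`, by the identity outside `[0,1]`. -/
def toReal (σ : IntervalMap) : ℝ → ℝ :=
  fun x => if h : x ∈ unitI then (σ ⟨x, h⟩ : ℝ) else x

/-- `σ` is an orientation-preserving homeomorphism of `[0,1]` (a strictly
increasing bijection of `[0,1]`; such a map automatically fixes `0` and `1`
and is continuous). -/
def IsOPH (σ : IntervalMap) : Prop := StrictMono fun x : ↥unitI => (σ x : ℝ)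

/-- `σ` extends to a `C¹` function on `[0,1]`. -/
def IsC1On (σ : IntervalMap) : Prop := ContDiffOn ℝ 1 (toReal σ) unitI

/-- `σ` is an orientation-preserving `C¹` diffeomorphism of `[0,1]`. -/
def IsOPD (σ : IntervalMap) : Prop := IsOPH σ ∧ IsC1On σ ∧ IsC1On σ⁻¹

/-- `Γ` is a subgroup of `Diff₊(I)`. -/
def DiffSubgroup (Γ : Subgroup IntervalMap) : Prop := ∀ γ ∈ Γ, IsOPD γ

/-- `Γ` is a subgroup of `Homeo₊(I)`. -/
def HomeoSubgroup (Γ : Subgroup IntervalMap) : Prop := ∀ γ ∈ Γ, IsOPH γ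

/-- The set of fixed points of `σ` in the open interval `(0,1)`. -/
def FixPts (σ : IntervalMap) : Set ↥unitI :=
  {x : ↥unitI | σ x = x ∧ 0 < (x : ℝ) ∧ (x : ℝ) < 1}

/-- Every non-identity element of `Γ` has finitely many fixed points in `(0,1)`. -/
def FinFix (Γ : Subgroup IntervalMap) : Prop := ∀ γ ∈ Γ, γ ≠ 1 → (FixPts γ).Finite

/-- The `C⁰`-norm `‖σ‖ = sup_{x ∈ [0,1]} |σ(x) - x|`. -/
def C0norm (σ : IntervalMap) : ℝ := ⨆ x : ↥unitI, |(σ x : ℝ) - (x : ℝ)|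

/-- `Γ` is locally transitive. -/
def LocTrans (Γ : Subgroup IntervalMap) : Prop :=
  ∀ p : ↥unitI, 0 < (p : ℝ) → (p : ℝ) < 1 → ∀ ε : ℝ, 0 < ε →
    ∃ γ ∈ Γ, C0norm γ < ε ∧ γ p ≠ p

/-- `Γ` is irreducible: no global fixed point in `(0,1)`. -/
def Irred (Γ : Subgroup IntervalMap) : Prop :=
  ¬ ∃ p : ↥unitI, 0 < (p : ℝ) ∧ (p : ℝ) < 1 ∧ ∀ γ ∈ Γ, γ p = p

/-- The group `Aff₊(ℝ)` of orientation-preserving affine maps `x ↦ a x + b`,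
`a > 0`, as a subgroup of the permutation group of `ℝ`. -/
def AffPlus : Subgroup (Equiv.Perm ℝ) where
  carrier := {e | ∃ a b : ℝ, 0 < a ∧ ∀ x, e x = a * x + b}
  one_mem' := ⟨1, 0, one_pos, fun x => by simp⟩
  mul_mem' := by
    rintro e f ⟨a, b, ha, he⟩ ⟨c, d, hc, hf⟩
    refine ⟨a * c, a * d + b, mul_pos ha hc, fun x => ?_⟩
    rw [Equiv.Perm.mul_apply, hf, he]; ring
  inv_mem' := by
    rintro e ⟨a, b, ha, he⟩
    refine ⟨a⁻¹, -b / a, by positivity, fun y => ?_⟩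
    apply e.injective
    rw [show e (e⁻¹ y) = y from e.apply_symm_apply y, he]
    field_simp
    ring

/-- `G` embeds into (i.e. is isomorphic to a subgroup of) `Aff₊(ℝ)`. -/
def EmbedsInAff (G : Type*) [Group G] : Prop :=
  ∃ φ : G →* ↥AffPlus, Function.Injective φ

/-- `G` embeds into `Aff₊(ℝ)ⁿ` for some `n ≥ 1`. -/
def EmbedsInAffPow (G : Type*) [Group G] : Prop :=
  ∃ n : ℕ, 1 ≤ n ∧ ∃ φ : G →* (Fin n → ↥AffPlus), Function.Injective φ

/-- `G` has infinite girth: for every `m` there is a finite generating set `S`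
such that no non-trivial reduced word of length at most `m` in `S ∪ S⁻¹`
represents the identity. -/
def HasInfiniteGirth (G : Type*) [Group G] : Prop :=
  ∀ m : ℕ, ∃ S : Finset G, Subgroup.closure (S : Set G) = ⊤ ∧
    ∀ w : FreeGroup {x // x ∈ S}, w ≠ 1 →
      (∃ l : List ({x // x ∈ S} × Bool), l.length ≤ m ∧ FreeGroup.mk l = w) →
      FreeGroup.lift (fun s => (s : G)) w ≠ 1

/-- `a` and `b` generate a free semigroup on two generators: distinct
non-empty positive words in `a, b` give distinct elements. -/
def FreeSemigroupPair {G : Type*} [Group G] (a b : G) : Prop :=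
  Function.Injective
    ⇑(FreeSemigroup.lift (fun x : Bool => if x then a else b) : FreeSemigroup Bool →ₙ* G)

/-- `g < f` in the biorder: `g(x) < f(x)` near `0`. -/
def ltNear (g f : IntervalMap) : Prop :=
  ∃ δ : ℝ, 0 < δ ∧ ∀ x : ↥unitI, 0 < (x : ℝ) → (x : ℝ) < δ → (g x : ℝ) < (f x : ℝ)

/-- `g ≤ f` in the biorder. -/
def leNear (g f : IntervalMap) : Prop := ltNear g f ∨ g = f

/-- `g << f`: `g` is infinitesimal with respect to `f`, i.e. `gⁿ < f` for all `n ∈ ℤ`. -/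
def Infinitesimal (g f : IntervalMap) : Prop := ∀ n : ℤ, ltNear (g ^ n) f

/-- `(f, g)` is a crossed pair on the interval `(a,b)`: `f` fixes `a` and `b`
but no point strictly between them, while `g` maps `a` or `b` into `(a,b)`. -/
def CrossedOn (f g : IntervalMap) (a b : ↥unitI) : Prop :=
  f a = a ∧ f b = b ∧ (∀ x : ↥unitI, (a : ℝ) < x → (x : ℝ) < b → f x ≠ x) ∧
  (((a : ℝ) < (g a : ℝ) ∧ (g a : ℝ) < b) ∨ ((a : ℝ) < (g b : ℝ) ∧ (g b : ℝ) < b))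

/-- `(f, g)` is a crossed pair. -/
def CrossedPair (f g : IntervalMap) : Prop :=
  ∃ a b : ↥unitI, (a : ℝ) < b ∧ (CrossedOn f g a b ∨ CrossedOn g f a b)

/-- The auxiliary point configuration used in weak transitivity:
`extPt γ p 0 = 0`, `extPt γ p j = γ(pⱼ)` for `1 ≤ j ≤ k` (here `pⱼ = p ⟨j-1⟩`
in `0`-indexed notation), and `extPt γ p (k+1) = 1`. -/
def extPt (γ : IntervalMap) {k : ℕ} (p : Fin k → ↥unitI) (j : ℕ) : ℝ :=
  if j = 0 then 0 else if h : j - 1 < k then (γ (p ⟨j - 1, h⟩) : ℝ) else 1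

/-- `Γ` is weakly `k`-transitive. -/
def WeaklyKTrans (Γ : Subgroup IntervalMap) (k : ℕ) : Prop :=
  ∀ g ∈ Γ, ∀ p : Fin k → ↥unitI,
    (∀ i, 0 < (p i : ℝ) ∧ (p i : ℝ) < 1) →
    (StrictMono fun i => (p i : ℝ)) →
    ∀ ε : ℝ, 0 < ε →
      ∃ γ ∈ Γ, extPt γ p k < ε ∧
        ∀ i : Fin k,
          extPt γ p i.val < (g (γ (p i)) : ℝ) ∧
            (g (γ (p i)) : ℝ) < extPt γ p (i.val + 2)

/-- `Γ` is weakly transitive. -/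
def WeakTrans (Γ : Subgroup IntervalMap) : Prop := ∀ k : ℕ, 1 ≤ k → WeaklyKTrans Γ k

/-!
Near `0` the map `f` dominates `id`, `ω` and `ω⁻¹`. Since `z` is the first fixed point of the
continuous map `f`, this forces `x < f x` on `(0, z)`, so `f⁻ⁿ` contracts `(0, z)` to `0`.
Put `A = ω⁻¹ a` and `B = ω⁻¹ b`. From `f^p a < b`, `ω⁻¹ a < f a` and `ω (f⁻¹ b) < b` we get
`f^(p-2) A < B`. Apply `f⁻ⁿ`, which commutes with `f`; for large `n` the points `f⁻ⁿ A` and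
`f⁻ⁿ⁻¹ B` lie in the region where `ω < f` and `ω⁻¹ < f`, and using these two comparisons costs
two more powers of `f`: `f^(p-4) (ω f⁻ⁿ A) < ω f⁻ⁿ B`.
-/

namespace Equiv.Perm

variable {α : Type*} [LinearOrder α] {f ω : Perm α}

theorem strictMono_inv (hf : StrictMono f) : StrictMono ⇑f⁻¹ := fun x y hxy =>
  hf.lt_iff_lt.mp (by simpa using hxy)

theorem strictMono_pow (hf : StrictMono f) (n : ℕ) : StrictMono ⇑(f ^ n) := by
  rw [coe_pow]
  exact hf.iterate n

theorem pow_add_two_apply_inv_lt (hf : StrictMono f) (hω : StrictMono ω) {a b : α} {q : ℕ}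
    (ha : ω⁻¹ a < f a) (hb : ω (f⁻¹ b) < b) (hab : (f ^ (q + 4)) a < b) :
    (f ^ (q + 2)) (ω⁻¹ a) < ω⁻¹ b := calc
  (f ^ (q + 2)) (ω⁻¹ a) < (f ^ (q + 2)) (f a) := strictMono_pow hf _ ha
  _ = f⁻¹ ((f ^ (q + 4)) a) := by simp only [← mul_apply]; congr 1; group
  _ < f⁻¹ b := strictMono_inv hf hab
  _ < ω⁻¹ b := by simpa using strictMono_inv hω hb

theorem pow_apply_conj_lt (hf : StrictMono f) (hω : StrictMono ω) {a b : α} {q n : ℕ}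
    (hab : (f ^ (q + 2)) a < b) (ha : ω ((f ^ n)⁻¹ a) < f ((f ^ n)⁻¹ a))
    (hb : ω⁻¹ ((f ^ (n + 1))⁻¹ b) < f ((f ^ (n + 1))⁻¹ b)) :
    (f ^ q) ((ω * (f ^ n)⁻¹) a) < (ω * (f ^ n)⁻¹) b := by
  have hb' : f ((f ^ (n + 1))⁻¹ b) = (f ^ n)⁻¹ b := by
    simp only [← mul_apply]; congr 1; group
  calc (f ^ q) ((ω * (f ^ n)⁻¹) a) < (f ^ q) (f ((f ^ n)⁻¹ a)) := strictMono_pow hf _ ha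
    _ = (f ^ (n + 1))⁻¹ ((f ^ (q + 2)) a) := by simp only [← mul_apply]; congr 1; group
    _ < (f ^ (n + 1))⁻¹ b := strictMono_inv (strictMono_pow hf _) hab
    _ < (ω * (f ^ n)⁻¹) b := by rw [mul_apply, ← hb']; simpa using hω hb

end Equiv.Perm

theorem IsOPH.strictMono {σ : IntervalMap} (h : IsOPH σ) : StrictMono σ := fun _ _ hxy => h hxy

namespace IntervalMap

theorem toReal_of_mem (σ : IntervalMap) {x : ℝ} (hx : x ∈ unitI) : toReal σ x = σ ⟨x, hx⟩ :=
  dif_pos hx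

theorem toReal_coe (σ : IntervalMap) (x : unitI) : toReal σ x = σ x :=
  toReal_of_mem σ x.2

variable {σ : IntervalMap} {z : unitI}

theorem apply_pos (hσ : StrictMono σ) {x : unitI} (hx : 0 < (x : ℝ)) : 0 < (σ x : ℝ) :=
  (σ ⟨0, by simp⟩).2.1.trans_lt (hσ hx)

theorem lt_apply_of_lt_of_forall_fixPts_le (hc : ContinuousOn (toReal σ) unitI)
    (h0 : ltNear 1 σ) (hz : ∀ y ∈ FixPts σ, z ≤ y) {x : unitI}
    (hx : 0 < (x : ℝ)) (hxz : (x : ℝ) < z) : (x : ℝ) < σ x := by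
  by_contra! hle
  obtain ⟨δ, hδ, hnear⟩ := h0
  obtain ⟨w, hw, hwδx⟩ := exists_between (lt_min hδ hx)
  have hwI : w ∈ unitI := ⟨hw.le, (hwδx.trans_le (min_le_right _ _)).le.trans x.2.2⟩
  have hIcc : Set.Icc w x ⊆ unitI := Set.Icc_subset_Icc hw.le x.2.2
  have hw' : w ≤ toReal σ w := by
    rw [toReal_of_mem σ hwI]
    exact (hnear ⟨w, hwI⟩ hw (hwδx.trans_le (min_le_left _ _))).le
  have hx' : toReal σ x ≤ x := by rwa [toReal_coe]
  obtain ⟨c, hc, hc0⟩ := intermediate_value_Icc' (hwδx.trans_le (min_le_right _ _)).le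
    ((hc.mono hIcc).sub continuousOn_id)
    (show (0 : ℝ) ∈ Set.Icc (toReal σ x - x) (toReal σ w - w) from
      ⟨by linarith, by linarith⟩)
  have hcfix : (⟨c, hIcc hc⟩ : unitI) ∈ FixPts σ :=
    ⟨Subtype.ext (by rw [← toReal_of_mem]; simpa [sub_eq_zero] using hc0), hw.trans_le hc.1,
      hc.2.trans_lt (hxz.trans_le z.2.2)⟩
  exact (hc.2.trans_lt hxz).not_ge (hz _ hcfix)

theorem inv_apply_lt_self (hσ : StrictMono σ) (hσz : σ z = z)
    (hlt : ∀ x : unitI, 0 < (x : ℝ) → (x : ℝ) < z → (x : ℝ) < σ x) {x : unitI}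
    (hx : 0 < (x : ℝ)) (hxz : (x : ℝ) < z) : (σ⁻¹ x : ℝ) < x := by
  have hxz' : σ⁻¹ x < z := by
    simpa using Equiv.Perm.strictMono_inv hσ (show x < σ z by rwa [hσz])
  simpa using hlt _ (apply_pos (Equiv.Perm.strictMono_inv hσ) hx) hxz'

open Filter Topology in
theorem tendsto_inv_pow_apply_nhds_zero (hσ : StrictMono σ) (hc : ContinuousOn (toReal σ) unitI)
    (hσz : σ z = z) (hlt : ∀ x : unitI, 0 < (x : ℝ) → (x : ℝ) < z → (x : ℝ) < σ x) {y : unitI}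
    (hy : 0 < (y : ℝ)) (hyz : (y : ℝ) < z) :
    Tendsto (fun n : ℕ => (((σ ^ n)⁻¹ y : unitI) : ℝ)) atTop (𝓝 0) := by
  set u : ℕ → unitI := fun n => (σ ^ n)⁻¹ y
  have hsucc (n : ℕ) : u (n + 1) = σ⁻¹ (u n) := by
    simp only [u, pow_succ, mul_inv_rev, Equiv.Perm.mul_apply]
  have hmem (n : ℕ) : 0 < (u n : ℝ) ∧ (u n : ℝ) < z := by
    induction n with
    | zero => exact ⟨hy, hyz⟩
    | succ n ih =>
      rw [hsucc]
      exact ⟨apply_pos (Equiv.Perm.strictMono_inv hσ) ih.1,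
        (inv_apply_lt_self hσ hσz hlt ih.1 ih.2).trans ih.2⟩
  have hanti : Antitone fun n => (u n : ℝ) := antitone_nat_of_succ_le fun n => by
    rw [hsucc]
    exact (inv_apply_lt_self hσ hσz hlt (hmem n).1 (hmem n).2).le
  have hbdd : BddBelow (Set.range fun n => (u n : ℝ)) :=
    ⟨0, by rintro _ ⟨n, rfl⟩; exact (hmem n).1.le⟩
  have hL := tendsto_atTop_ciInf hanti hbdd
  set L := ⨅ n, (u n : ℝ)
  have hL0 : 0 ≤ L := le_ciInf fun n => (hmem n).1.le
  have hLz : L < z := (ciInf_le hbdd 0).trans_lt (hmem 0).2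
  have hLI : L ∈ unitI := ⟨hL0, hLz.le.trans z.2.2⟩
  have hfix : toReal σ L = L := by
    have hσL := ((hc L hLI).tendsto.comp (tendsto_nhdsWithin_iff.mpr
      ⟨hL, .of_forall fun n => (u n).2⟩)).comp (tendsto_add_atTop_nat 1)
    refine tendsto_nhds_unique ?_ hL
    simpa [Function.comp_def, toReal_coe, hsucc] using hσL
  rcases hL0.eq_or_lt with hL0 | hL0
  · rwa [← hL0] at hL
  · exact absurd (by rw [← toReal_of_mem σ hLI]; exact hfix) (hlt ⟨L, hLI⟩ hL0 hLz).ne'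

end IntervalMap

open Filter Equiv.Perm IntervalMap in
theorem stmt10_general (Γ : Subgroup IntervalMap) (hΓdiff : DiffSubgroup Γ)
    (S : Finset IntervalMap) (hSsub : (S : Set IntervalMap) ⊆ Γ)
    (f : IntervalMap) (hfS : f ∈ S)
    (z : ↥unitI) (hz : z ∈ FixPts f) (hzmin : ∀ y ∈ FixPts f, z ≤ y)
    (ω : IntervalMap) (hω : ω ∈ Γ) (hωinf : Infinitesimal ω f) :
    ∃ ε : ℝ, 0 < ε ∧ ∀ a b : ↥unitI, 0 < (a : ℝ) → (a : ℝ) < (b : ℝ) →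
      (b : ℝ) < ε → ∀ p : ℕ, 4 ≤ p → ((f ^ p) a : ℝ) < (b : ℝ) →
        ∃ N : ℕ, ∀ n : ℕ, N ≤ n →
          ((f ^ (p - 4)) ((ω * (f ^ n)⁻¹ * ω⁻¹) a) : ℝ) <
            ((ω * (f ^ n)⁻¹ * ω⁻¹) b : ℝ) := by
  have hfΓ : f ∈ Γ := hSsub hfS
  have hmono {γ} (hγ : γ ∈ Γ) : StrictMono γ := (hΓdiff γ hγ).1.strictMono
  have hpos {γ} (hγ : γ ∈ Γ) {x : unitI} (hx : 0 < (x : ℝ)) : 0 < (γ x : ℝ) :=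
    apply_pos (hmono hγ) hx
  have hfc : ContinuousOn (toReal f) unitI := (hΓdiff f hfΓ).2.1.continuousOn
  have hlt (x : unitI) (hx : 0 < (x : ℝ)) (hxz : (x : ℝ) < z) : (x : ℝ) < f x :=
    lt_apply_of_lt_of_forall_fixPts_le hfc (by simpa using hωinf 0) hzmin hx hxz
  obtain ⟨δ₁, hδ₁, h₁⟩ := hωinf 1
  obtain ⟨δ₂, hδ₂, h₂⟩ := hωinf (-1)
  simp only [zpow_one, zpow_neg_one] at h₁ h₂
  refine ⟨min (min δ₁ δ₂) z, lt_min (lt_min hδ₁ hδ₂) hz.2.1, fun a b ha hab hb p hp hfp => ?_⟩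
  obtain ⟨⟨hb₁, hb₂⟩, hbz⟩ : ((b : ℝ) < δ₁ ∧ (b : ℝ) < δ₂) ∧ (b : ℝ) < z := by simpa using hb
  obtain ⟨q, rfl⟩ := Nat.exists_eq_add_of_le' hp
  have hb0 : 0 < (b : ℝ) := ha.trans hab
  have hfb : (f⁻¹ b : ℝ) < b := inv_apply_lt_self (hmono hfΓ) hz.1 hlt hb0 hbz
  have hAB : (f ^ (q + 2)) (ω⁻¹ a) < ω⁻¹ b := pow_add_two_apply_inv_lt (hmono hfΓ) (hmono hω)
    (h₂ a ha (hab.trans hb₂)) (by simpa using h₁ _ (hpos (Γ.inv_mem hfΓ) hb0) (hfb.trans hb₁)) hfp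
  have hBz : (ω⁻¹ b : ℝ) < z := (h₂ b hb0 hb₂).trans (hz.1 ▸ hmono hfΓ hbz)
  obtain ⟨N, hN⟩ := eventually_atTop.mp ((tendsto_inv_pow_apply_nhds_zero (hmono hfΓ) hfc hz.1
    hlt (hpos (Γ.inv_mem hω) hb0) hBz).eventually (gt_mem_nhds (lt_min hδ₁ hδ₂)))
  refine ⟨N, fun n hn => ?_⟩
  obtain ⟨hYn, -⟩ := lt_min_iff.mp (hN n hn)
  obtain ⟨-, hYn₁⟩ := lt_min_iff.mp (hN (n + 1) (hn.trans n.le_succ))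
  have hfnΓ (m : ℕ) : (f ^ m)⁻¹ ∈ Γ := Γ.inv_mem (Γ.pow_mem hfΓ m)
  rw [Nat.add_sub_cancel]
  exact pow_apply_conj_lt (hmono hfΓ) (hmono hω) hAB
    (h₁ _ (hpos (hfnΓ n) (hpos (Γ.inv_mem hω) ha))
      (lt_trans (hmono (hfnΓ n) (hmono (Γ.inv_mem hω) hab)) hYn))
    (h₂ _ (hpos (hfnΓ (n + 1)) (hpos (Γ.inv_mem hω) hb0)) hYn₁)

theorem stmt10 (Γ : Subgroup IntervalMap) (hΓdiff : DiffSubgroup Γ)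
    (hΓfix : FinFix Γ) (hΓirr : Irred Γ)
    (S : Finset IntervalMap) (hSsub : (S : Set IntervalMap) ⊆ Γ)
    (hSsym : ∀ s ∈ S, s⁻¹ ∈ S)
    (hSgen : Subgroup.closure (S : Set IntervalMap) = Γ)
    (f : IntervalMap) (hfS : f ∈ S) (hfbig : ∀ ξ ∈ S, leNear ξ f)
    (z : ↥unitI) (hz : z ∈ FixPts f) (hzmin : ∀ y ∈ FixPts f, z ≤ y)
    (ω : IntervalMap) (hω : ω ∈ Γ) (hωinf : Infinitesimal ω f)
    (hωz : (z : ℝ) < (ω z : ℝ)) :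
    ∃ ε : ℝ, 0 < ε ∧ ∀ a b : ↥unitI, 0 < (a : ℝ) → (a : ℝ) < (b : ℝ) →
      (b : ℝ) < ε → ∀ p : ℕ, 4 ≤ p → ((f ^ p) a : ℝ) < (b : ℝ) →
        ∃ N : ℕ, ∀ n : ℕ, N ≤ n →
          ((f ^ (p - 4)) ((ω * (f ^ n)⁻¹ * ω⁻¹) a) : ℝ) <
            ((ω * (f ^ n)⁻¹ * ω⁻¹) b : ℝ) :=
  stmt10_general Γ hΓdiff S hSsub f hfS z hz hzmin ω hω hωinf
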